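/- Let p ≥ 2 be an integer and α, β ∈ ℝ, and define g(τ) = (1+τ)^{p+2}(1−τ)^{p−2}·(α + β·I₋(τ)) for τ ∈ (−1,1). Then g extends to a C^∞ function on a neighbourhood of τ = −1 (i.e. there exist ε ∈ (0,1) and a function h smooth on (−1−ε, −1+ε) agreeing with g on (−1, −1+ε)) if and only if β = 0. -/

import Mathlib

open Set MeasureTheory intervalIntegral Filter Topology

/-- The integral `I₋(τ) = ∫₀^τ (1−s)^{−(p−1)} (1+s)^{−(p+3)} ds`. -/
noncomputable def Iminus (p : ℕ) (τ : ℝ) : ℝ :=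
  ∫ s in (0 : ℝ)..τ, 1 / ((1 - s) ^ (p - 1) * (1 + s) ^ (p + 3))

lemma integrand_contAt (p : ℕ) {x : ℝ} (h1 : -1 < x) (h2 : x < 1) :
    ContinuousAt (fun s : ℝ => 1 / ((1 - s) ^ (p - 1) * (1 + s) ^ (p + 3))) x := by
  apply ContinuousAt.div continuousAt_const
  · fun_prop
  · have hx1 : (0:ℝ) < 1 - x := by linarith
    have hx2 : (0:ℝ) < 1 + x := by linarith
    positivity

lemma Iminus_hasDerivAt (p : ℕ) {τ : ℝ} (h1 : -1 < τ) (h2 : τ < 1) :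
    HasDerivAt (Iminus p) (1 / ((1 - τ) ^ (p - 1) * (1 + τ) ^ (p + 3))) τ := by
  have hsub : Set.uIcc (0:ℝ) τ ⊆ Set.Ioo (-1:ℝ) 1 := by
    intro x hx
    rcases Set.mem_uIcc.mp hx with ⟨h, h'⟩ | ⟨h, h'⟩ <;> exact ⟨by linarith, by linarith⟩
  have hcont : ContinuousOn (fun s : ℝ => 1 / ((1 - s) ^ (p - 1) * (1 + s) ^ (p + 3)))
      (Set.Ioo (-1:ℝ) 1) := fun x hx => (integrand_contAt p hx.1 hx.2).continuousWithinAt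
  exact intervalIntegral.integral_hasDerivAt_right
    ((hcont.mono hsub).intervalIntegrable)
    ((ContinuousOn.stronglyMeasurableAtFilter isOpen_Ioo hcont) τ ⟨h1, h2⟩)
    (integrand_contAt p h1 h2)

lemma nat_mul_pow_sub_one (m : ℕ) (x : ℝ) : (m:ℝ) * x^(m-1) * x = (m:ℝ) * x^m := by
  cases m with
  | zero => simp
  | succ k => simp only [Nat.add_sub_cancel, pow_succ]; ring

lemma key0 (m : ℕ) (α β : ℝ) {τ : ℝ} (h1 : -1 < τ) (h2 : τ < 1) :
    ∃ D : ℝ, HasDerivAt (fun x => (1+x)^(m+4)*(1-x)^m*(α + β*Iminus (m+2) x)) D τ ∧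
      (1-τ^2) * D =
        (4 - (2*(m:ℝ)+4)*τ) * ((1+τ)^(m+4)*(1-τ)^m*(α + β*Iminus (m+2) τ)) + β := by
  have e1 : m + 2 - 1 = m + 1 := by omega
  have e2 : m + 2 + 3 = m + 5 := by omega
  have d1 : HasDerivAt (fun x : ℝ => (1+x)^(m+4))
      (((m:ℝ)+4) * (1+τ)^(m+3) * 1) τ := by
    have := ((hasDerivAt_id τ).const_add (1:ℝ)).fun_pow (m+4)
    norm_num at this ⊢
    convert this using 2
  have d2 : HasDerivAt (fun x : ℝ => (1-x)^m)
      ((m:ℝ) * (1-τ)^(m-1) * (-1)) τ := by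
    have := ((hasDerivAt_id τ).const_sub (1:ℝ)).fun_pow m
    simpa using this
  have dI : HasDerivAt (Iminus (m+2))
      (1 / ((1 - τ) ^ (m+1) * (1 + τ) ^ (m+5))) τ := by
    have := Iminus_hasDerivAt (m+2) h1 h2
    rwa [e1, e2] at this
  have dG : HasDerivAt (fun x => α + β * Iminus (m+2) x)
      (β * (1 / ((1 - τ) ^ (m+1) * (1 + τ) ^ (m+5)))) τ := (dI.const_mul β).const_add α
  have dg := (d1.fun_mul d2).fun_mul dG
  refine ⟨_, dg, ?_⟩
  have hτ1 : (0:ℝ) < 1 + τ := by linarith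
  have hτ2 : (0:ℝ) < 1 - τ := by linarith
  have hkey1 : (1-τ^2) * (((m:ℝ)+4) * (1+τ)^(m+3) * 1 * (1-τ)^m
        + (1+τ)^(m+4) * ((m:ℝ) * (1-τ)^(m-1) * (-1)))
      = (4 - (2*(m:ℝ)+4)*τ) * ((1+τ)^(m+4)*(1-τ)^m) := by
    have hf : (1-τ^2) * ((1+τ)^(m+4) * ((m:ℝ) * (1-τ)^(m-1) * (-1)))
        = -(1+τ)^(m+5) * ((m:ℝ) * (1-τ)^m) := by
      linear_combination (-(1+τ)^(m+5)) * nat_mul_pow_sub_one m (1-τ)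
    linear_combination hf
  have hkey2 : (1-τ^2) * ((1+τ)^(m+4)*(1-τ)^m * (1 / ((1 - τ) ^ (m+1) * (1 + τ) ^ (m+5)))) = 1 := by
    have hQ : ((1 - τ) ^ (m+1) * (1 + τ) ^ (m+5) : ℝ) ≠ 0 := by positivity
    field_simp
    ring
  linear_combination (α + β*Iminus (m+2) τ) * hkey1 + β * hkey2

/-- Let `p ≥ 2`, `α β : ℝ`, and `g(τ) = (1+τ)^(p+2)(1−τ)^(p−2)(α + β I₋(τ))` on `(−1,1)`.
Then `g` extends to a `C^∞` function on a neighbourhood of `τ = −1` (i.e. there exist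
`ε ∈ (0,1)` and a function `h` smooth on `(−1−ε, −1+ε)` agreeing with `g` on `(−1, −1+ε)`)
if and only if `β = 0`. -/
theorem stmt_6 (p : ℕ) (hp : 2 ≤ p) (α β : ℝ) :
    (∃ ε ∈ Set.Ioo (0 : ℝ) 1, ∃ h : ℝ → ℝ,
        ContDiffOn ℝ (⊤ : ℕ∞) h (Set.Ioo (-1 - ε) (-1 + ε)) ∧
        ∀ τ ∈ Set.Ioo (-1 : ℝ) (-1 + ε),
          h τ = (1 + τ) ^ (p + 2) * (1 - τ) ^ (p - 2) * (α + β * Iminus p τ))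
      ↔ β = 0 := by
  constructor
  · rintro ⟨ε, ⟨hε0, hε1⟩, h, hsm, heq⟩
    obtain ⟨m, rfl⟩ : ∃ m, p = m + 2 := ⟨p - 2, by omega⟩
    simp only [show m + 2 + 2 = m + 4 from by omega, show m + 2 - 2 = m from by omega] at heq
    set s : Set ℝ := Set.Ioo (-1 - ε) (-1 + ε) with hs_def
    set t : Set ℝ := Set.Ioo (-1 : ℝ) (-1 + ε) with ht_def
    have hso : IsOpen s := isOpen_Ioo
    have hto : IsOpen t := isOpen_Ioo
    have hsu : UniqueDiffOn ℝ s := hso.uniqueDiffOn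
    have hts : t ⊆ s := fun x hx => ⟨by linarith [hx.1], hx.2⟩
    have hm1s : (-1 : ℝ) ∈ s := ⟨by linarith, by linarith⟩
    have htlt : ∀ x ∈ t, -1 < x ∧ x < 1 := fun x hx => ⟨hx.1, by linarith [hx.2]⟩
    set H : ℕ → ℝ → ℝ := fun n => iteratedDerivWithin n h s with hH_def
    have hHc : ∀ n, ContinuousOn (H n) s := fun n =>
      hsm.continuousOn_iteratedDerivWithin (by exact_mod_cast le_top) hsu
    have hHd : ∀ n, ∀ x ∈ s, HasDerivAt (H n) (H (n + 1) x) x := by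
      intro n x hx
      have hd : DifferentiableOn ℝ (H n) s :=
        hsm.differentiableOn_iteratedDerivWithin (by exact_mod_cast ENat.coe_lt_top n) hsu
      have h2 := (hd x hx).differentiableAt (hso.mem_nhds hx)
      have h3 : deriv (H n) x = H (n + 1) x := by
        rw [← derivWithin_of_isOpen hso hx, hH_def]
        exact (congrFun (iteratedDerivWithin_succ (n := n) (f := h) (s := s)) x).symm
      rw [← h3]; exact h2.hasDerivAt
    -- the fundamental recurrence
    have Qs : ∀ n : ℕ, ∀ τ ∈ t, (1 - τ^2) * H (n+1) τ =
        ((2*(n:ℝ) - (2*(m:ℝ)+4))*τ + 4) * H n τ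
          + ((n:ℝ)*((n:ℝ) - 1 - (2*(m:ℝ)+4))) * H (n-1) τ
          + (if n = 0 then β else 0) := by
      intro n
      induction n with
      | zero =>
        intro τ hτ
        obtain ⟨h1, h2⟩ := htlt τ hτ
        obtain ⟨D, hD, hkey⟩ := key0 m α β h1 h2
        have hH1 : H 1 τ = D := by
          have hev : h =ᶠ[𝓝 τ] (fun x => (1+x)^(m+4)*(1-x)^m*(α + β*Iminus (m+2) x)) :=
            Filter.eventuallyEq_of_mem (hto.mem_nhds hτ) (fun x hx => heq x hx)
          have hder : deriv h τ = D := by rw [hev.deriv_eq]; exact hD.deriv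
          have : H 1 τ = derivWithin h s τ := by
            rw [hH_def]
            exact congrFun (iteratedDerivWithin_one (f := h) (s := s)) τ
          rw [this, derivWithin_of_isOpen hso (hts hτ), hder]
        have hH0 : H 0 τ = (1+τ)^(m+4)*(1-τ)^m*(α + β*Iminus (m+2) τ) := by
          rw [hH_def]
          simp only [iteratedDerivWithin_zero]
          exact heq τ hτ
        rw [hH1, hH0]
        simp only [if_pos rfl]
        push_cast
        linear_combination hkey
      | succ n ih =>
        intro τ hτ
        have hτs := hts hτ
        have dL : HasDerivAt (fun x : ℝ => (1 - x^2) * H (n+1) x)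
            ((-2*τ) * H (n+1) τ + (1 - τ^2) * H (n+2) τ) τ := by
          have dA : HasDerivAt (fun x : ℝ => 1 - x^2) (-2*τ) τ := by
            simpa using ((hasDerivAt_pow 2 τ).const_sub 1)
          simpa using dA.fun_mul (hHd (n+1) τ hτs)
        have dR : HasDerivAt (fun x : ℝ =>
            ((2*(n:ℝ) - (2*(m:ℝ)+4))*x + 4) * H n x
              + ((n:ℝ)*((n:ℝ) - 1 - (2*(m:ℝ)+4))) * H (n-1) x
              + (if n = 0 then β else 0))
            ((2*(n:ℝ) - (2*(m:ℝ)+4)) * H n τ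
              + ((2*(n:ℝ) - (2*(m:ℝ)+4))*τ + 4) * H (n+1) τ
              + ((n:ℝ)*((n:ℝ) - 1 - (2*(m:ℝ)+4))) * H (n-1+1) τ) τ := by
          have dB : HasDerivAt (fun x : ℝ => (2*(n:ℝ) - (2*(m:ℝ)+4))*x + 4)
              (2*(n:ℝ) - (2*(m:ℝ)+4)) τ := by
            simpa using ((hasDerivAt_id τ).const_mul (2*(n:ℝ) - (2*(m:ℝ)+4))).add_const 4
          have := ((dB.fun_mul (hHd n τ hτs)).fun_add
            ((hHd (n-1) τ hτs).const_mul ((n:ℝ)*((n:ℝ) - 1 - (2*(m:ℝ)+4))))).add_const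
            (if n = 0 then β else 0)
          convert this using 1
        have hev : (fun x : ℝ => (1 - x^2) * H (n+1) x) =ᶠ[𝓝 τ]
            (fun x : ℝ => ((2*(n:ℝ) - (2*(m:ℝ)+4))*x + 4) * H n x
              + ((n:ℝ)*((n:ℝ) - 1 - (2*(m:ℝ)+4))) * H (n-1) x
              + (if n = 0 then β else 0)) :=
          Filter.eventuallyEq_of_mem (hto.mem_nhds hτ) (fun x hx => ih x hx)
        have hde : (-2*τ) * H (n+1) τ + (1 - τ^2) * H (n+2) τ
            = (2*(n:ℝ) - (2*(m:ℝ)+4)) * H n τ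
              + ((2*(n:ℝ) - (2*(m:ℝ)+4))*τ + 4) * H (n+1) τ
              + ((n:ℝ)*((n:ℝ) - 1 - (2*(m:ℝ)+4))) * H (n-1+1) τ := by
          rw [← dL.deriv, hev.deriv_eq, dR.deriv]
        have hidx : ((n:ℝ)*((n:ℝ) - 1 - (2*(m:ℝ)+4))) * H (n-1+1) τ
            = ((n:ℝ)*((n:ℝ) - 1 - (2*(m:ℝ)+4))) * H n τ := by
          cases n with
          | zero => simp
          | succ k => rfl
        rw [hidx] at hde
        simp only [Nat.add_sub_cancel, Nat.succ_ne_zero, if_false]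
        push_cast
        push_cast at hde
        linear_combination hde
    -- boundary relations at τ = -1
    have ER : ∀ n : ℕ, 0 =
        ((2*(n:ℝ) - (2*(m:ℝ)+4))*(-1) + 4) * H n (-1)
          + ((n:ℝ)*((n:ℝ) - 1 - (2*(m:ℝ)+4))) * H (n-1) (-1)
          + (if n = 0 then β else 0) := by
      intro n
      set F : ℝ → ℝ := fun τ =>
        ((2*(n:ℝ) - (2*(m:ℝ)+4))*τ + 4) * H n τ
          + ((n:ℝ)*((n:ℝ) - 1 - (2*(m:ℝ)+4))) * H (n-1) τ
          + (if n = 0 then β else 0) - (1 - τ^2) * H (n+1) τ with hF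
      have hFc : ContinuousAt F (-1) := by
        apply ContinuousOn.continuousAt ?_ (hso.mem_nhds hm1s)
        apply ContinuousOn.sub
        apply ContinuousOn.add
        apply ContinuousOn.add
        · exact (Continuous.continuousOn ((continuous_const.mul continuous_id).add continuous_const)).mul (hHc n)
        · exact continuousOn_const.mul (hHc (n-1))
        · exact continuousOn_const
        · exact (Continuous.continuousOn (continuous_const.sub (continuous_pow 2))).mul (hHc (n+1))
      have hzero : ∀ x ∈ t, F x = 0 := by
        intro x hx
        rw [hF]
        linear_combination - Qs n x hx
      have hne : (-1:ℝ) < -1 + ε := by linarith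
      have h1 : Filter.Tendsto F (𝓝[>] (-1:ℝ)) (𝓝 (F (-1))) :=
        hFc.tendsto.mono_left nhdsWithin_le_nhds
      have h2 : F =ᶠ[𝓝[>] (-1:ℝ)] fun _ => 0 :=
        Filter.eventually_of_mem (Ioo_mem_nhdsGT_of_mem ⟨le_refl _, hne⟩) hzero
      have hlim := tendsto_nhds_unique (h1.congr' h2) tendsto_const_nhds
      rw [hF] at hlim
      linear_combination - hlim
    -- conclude
    have step1 : H (m+3) (-1) = 0 := by
      have := ER (m+4)
      simp only [show m+4-1 = m+3 from by omega, show m+4 ≠ 0 from by omega, if_false] at this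
      push_cast at this
      have hc : ((m:ℝ)+4)*((m:ℝ)+4 - 1 - (2*(m:ℝ)+4)) ≠ 0 := by
        have : ((m:ℝ)+4 - 1 - (2*(m:ℝ)+4)) < 0 := by push_cast; linarith [Nat.cast_nonneg (α := ℝ) m]
        have h4 : (0:ℝ) < (m:ℝ)+4 := by positivity
        exact mul_ne_zero (by linarith) (by linarith)
      have hzero : ((m:ℝ)+4)*((m:ℝ)+4 - 1 - (2*(m:ℝ)+4)) * H (m+3) (-1) = 0 := by
        linear_combination - this
      exact (mul_eq_zero.mp hzero).resolve_left hc
    have down : ∀ k : ℕ, H (m+3-k) (-1) = 0 := by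
      intro k
      induction k with
      | zero => exact step1
      | succ j ihj =>
        by_cases hj : m + 3 ≤ j
        · rw [show m+3-(j+1) = m+3-j from by omega]; exact ihj
        · push_neg at hj
          set n := m + 3 - (j+1) with hn
          have hn1 : n + 1 = m + 3 - j := by omega
          have hnle : n ≤ m + 2 := by omega
          have hE := ER (n+1)
          have hH1 : H (n+1) (-1) = 0 := by rw [hn1]; exact ihj
          simp only [Nat.add_sub_cancel, Nat.succ_ne_zero, if_false] at hE
          rw [hH1] at hE
          have hc : ((n:ℝ)+1)*((n:ℝ)+1 - 1 - (2*(m:ℝ)+4)) ≠ 0 := by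
            have hlt : (n:ℝ) ≤ (m:ℝ) + 2 := by exact_mod_cast hnle
            have : ((n:ℝ)+1 - 1 - (2*(m:ℝ)+4)) < 0 := by linarith [Nat.cast_nonneg (α := ℝ) m]
            have h4 : (0:ℝ) < (n:ℝ)+1 := by positivity
            exact mul_ne_zero (by linarith) (by linarith)
          have hzero : ((n:ℝ)+1)*((n:ℝ)+1 - 1 - (2*(m:ℝ)+4)) * H n (-1) = 0 := by
            push_cast at hE
            push_cast
            linear_combination - hE
          exact (mul_eq_zero.mp hzero).resolve_left hc
    have h00 : H 0 (-1) = 0 := by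
      have := down (m+3)
      rwa [show m+3-(m+3) = 0 from by omega] at this
    have := ER 0
    rw [h00] at this
    simp at this
    linarith
  · intro hβ
    subst hβ
    refine ⟨1/2, by norm_num, fun τ => (1+τ)^(p+2)*(1-τ)^(p-2)*α, ?_, ?_⟩
    · apply ContDiff.contDiffOn
      exact (((contDiff_const.add contDiff_id).pow _).mul
        ((contDiff_const.sub contDiff_id).pow _)).mul contDiff_const
    · intro τ hτ
      ring
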